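/- Let G be a finite simple graph, λ > 0, X ⊆ V(G) a subset of vertices, and I ⊆ X an independent set of G. Then ∑_{K ∈ 𝓘(G), K∩X = I} π_{G,λ}(K) ≤ λ^{|I|} · Z_{G−X}(λ) / Z_G(λ), where G−X is the subgraph of G induced by V(G) \ X. -/

import Mathlib

open Finset

section HardCoreDefs

variable {V : Type*} [Fintype V] [DecidableEq V]

/-- `I` is an independent set of the simple graph `G`. -/
def IsIndep (G : SimpleGraph V) (I : Finset V) : Prop :=
  ∀ u ∈ I, ∀ v ∈ I, ¬ G.Adj u v

open Classical in
/-- The set `𝓘(G)` of independent sets of `G`. -/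
noncomputable def indepSets (G : SimpleGraph V) : Finset (Finset V) :=
  Finset.univ.filter fun I => IsIndep G I

/-- The hard-core partition function `Z_G(λ)`. -/
noncomputable def Z (G : SimpleGraph V) (lam : ℝ) : ℝ :=
  ∑ I ∈ indepSets G, lam ^ I.card

/-- The hard-core distribution `π_{G,λ}`. -/
noncomputable def hardCore (G : SimpleGraph V) (lam : ℝ) (I : Finset V) : ℝ :=
  lam ^ I.card / Z G lam

open Classical in
/-- The transition probabilities of the Glauber dynamics on independent sets of `G`
with fugacity `λ`. -/
noncomputable def glauberP (G : SimpleGraph V) (lam : ℝ) (I J : Finset V) : ℝ :=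
  (1 / (Fintype.card V : ℝ)) * ∑ v : V,
    if v ∈ I then
      (if J = I.erase v then 1 / (lam + 1) else if J = I then lam / (lam + 1) else 0)
    else if IsIndep G (insert v I) then
      (if J = insert v I then lam / (lam + 1) else if J = I then 1 / (lam + 1) else 0)
    else (if J = I then 1 else 0)

/-- One step of the Glauber dynamics, applied to a distribution on independent sets. -/
noncomputable def stepDist (G : SimpleGraph V) (lam : ℝ) (μ : Finset V → ℝ) :
    Finset V → ℝ :=
  fun J => ∑ I ∈ indepSets G, μ I * glauberP G lam I J

/-- The distribution of the Glauber dynamics after `t` steps started from `I`. -/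
noncomputable def distAfter (G : SimpleGraph V) (lam : ℝ) (I : Finset V) (t : ℕ) :
    Finset V → ℝ :=
  (stepDist G lam)^[t] (fun J => if J = I then 1 else 0)

/-- Total variation distance between two distributions on independent sets. -/
noncomputable def tvDist (G : SimpleGraph V) (μ ν : Finset V → ℝ) : ℝ :=
  (1 / 2) * ∑ I ∈ indepSets G, |μ I - ν I|

/-- The mixing time `τ_{G,λ}` of the Glauber dynamics. -/
noncomputable def mixingTime (G : SimpleGraph V) (lam : ℝ) : ℕ :=
  sInf {t : ℕ | ∀ I ∈ indepSets G,
    tvDist G (distAfter G lam I t) (hardCore G lam) ≤ 1 / 4}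

/-- `λ̃ = e^{|ln λ|} = max (λ, 1/λ)`. -/
noncomputable def lamTilde (lam : ℝ) : ℝ := max lam lam⁻¹

/-- The independence number of the subgraph of `G` induced by `S`. -/
noncomputable def alphaOn (G : SimpleGraph V) (S : Finset V) : ℕ :=
  ((indepSets G).filter fun I => I ⊆ S).sup Finset.card

/-- The number of independent sets of the subgraph of `G` induced by `S`. -/
noncomputable def numIndepOn (G : SimpleGraph V) (S : Finset V) : ℕ :=
  ((indepSets G).filter fun I => I ⊆ S).card

/-- The subgraph of `G` induced by a finite vertex set `S`. -/
def inducedF (G : SimpleGraph V) (S : Finset V) : SimpleGraph {x : V // x ∈ S} :=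
  SimpleGraph.comap Subtype.val G

end HardCoreDefs

/-! Split an independent set `K` with `K ∩ X = I` as `I ∪ (K \ X)`: the map `K ↦ K \ X` is
injective on such sets and lands in the independent sets of `G - X`, and
`λ^{|K|} = λ^{|I|} λ^{|K \ X|}`. -/

section HardCore

variable {V : Type*} {G : SimpleGraph V}

theorem IsIndep.mono {J K : Finset V} (hK : IsIndep G K) (hJK : J ⊆ K) : IsIndep G J :=
  fun u hu v hv => hK u (hJK hu) v (hJK hv)

variable [Fintype V]

theorem mem_indepSets {K : Finset V} : K ∈ indepSets G ↔ IsIndep G K := by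
  simp [indepSets]

theorem empty_mem_indepSets : (∅ : Finset V) ∈ indepSets G :=
  mem_indepSets.2 fun u hu => absurd hu (Finset.notMem_empty u)

theorem Z_pos {lam : ℝ} (hlam : 0 < lam) : 0 < Z G lam := by
  have h := Finset.single_le_sum (f := fun K : Finset V => lam ^ K.card)
    (fun _ _ => by positivity) (empty_mem_indepSets (G := G))
  rw [Finset.card_empty, pow_zero] at h
  exact one_pos.trans_le h

variable [DecidableEq V]

theorem Z_inducedF (S : Finset V) (lam : ℝ) :
    Z (inducedF G S) lam = ∑ K ∈ (indepSets G).filter (· ⊆ S), lam ^ K.card := by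
  refine Finset.sum_nbij' (fun J => J.map (Function.Embedding.subtype _))
    (fun K => K.subtype (· ∈ S)) ?_ ?_ ?_ ?_ ?_
  · intro J hJ
    rw [mem_indepSets] at hJ
    rw [Finset.mem_filter, mem_indepSets]
    refine ⟨?_, ?_⟩
    · intro _ hu' _ hv'
      obtain ⟨u, hu, rfl⟩ := Finset.mem_map.1 hu'
      obtain ⟨v, hv, rfl⟩ := Finset.mem_map.1 hv'
      exact hJ u hu v hv
    · intro x hx
      obtain ⟨u, -, rfl⟩ := Finset.mem_map.1 hx
      exact u.2
  · intro K hK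
    rw [Finset.mem_filter, mem_indepSets] at hK
    rw [mem_indepSets]
    intro u hu v hv
    exact hK.1 u (Finset.mem_subtype.1 hu) v (Finset.mem_subtype.1 hv)
  · intro J _
    ext u
    simp
  · intro K hK
    exact Finset.subtype_map_of_mem (Finset.mem_filter.1 hK).2
  · intro J _
    rw [Finset.card_map]

theorem sum_pow_card_filter_inter_eq_le {lam : ℝ} (hlam : 0 ≤ lam) (X I : Finset V) :
    ∑ K ∈ (indepSets G).filter (fun K => K ∩ X = I), lam ^ K.card ≤
      lam ^ I.card * ∑ J ∈ (indepSets G).filter (· ⊆ Finset.univ \ X), lam ^ J.card := by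
  set A := (indepSets G).filter (fun K => K ∩ X = I)
  have hsplit : ∀ K ∈ A, lam ^ K.card = lam ^ I.card * lam ^ (K \ X).card := by
    intro K hK
    rw [← (Finset.mem_filter.1 hK).2, ← pow_add, Finset.card_inter_add_card_sdiff]
  have hinj : Set.InjOn (· \ X) A := by
    intro K hK K' hK' h
    rw [← Finset.sdiff_union_inter K X, ← Finset.sdiff_union_inter K' X,
      (Finset.mem_filter.1 hK).2, (Finset.mem_filter.1 hK').2]
    exact congrArg (· ∪ I) h
  have hmaps : A.image (· \ X) ⊆ (indepSets G).filter (· ⊆ Finset.univ \ X) := by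
    simp only [Finset.subset_iff, Finset.mem_image, Finset.mem_filter, mem_indepSets]
    rintro _ ⟨K, hK, rfl⟩
    refine ⟨(mem_indepSets.1 (Finset.mem_filter.1 hK).1).mono Finset.sdiff_subset, ?_⟩
    exact Finset.sdiff_subset_sdiff (Finset.subset_univ K) le_rfl
  calc ∑ K ∈ A, lam ^ K.card = lam ^ I.card * ∑ J ∈ A.image (· \ X), lam ^ J.card := by
        rw [Finset.sum_image hinj, Finset.mul_sum]
        exact Finset.sum_congr rfl hsplit
    _ ≤ _ := by gcongr

end HardCore

open Classical in
theorem statement_11_general (V : Type) [Fintype V] [DecidableEq V] (G : SimpleGraph V)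
    (lam : ℝ) (hlam : 0 < lam) (X I : Finset V) :
    ∑ K ∈ (indepSets G).filter (fun K => K ∩ X = I), hardCore G lam K ≤
      lam ^ I.card * Z (inducedF G (Finset.univ \ X)) lam / Z G lam := by
  simp only [hardCore, ← Finset.sum_div]
  gcongr
  · exact (Z_pos hlam).le
  · rw [Z_inducedF]
    exact sum_pow_card_filter_inter_eq_le hlam.le X I

open Classical in
/-- Let `G` be a finite simple graph, `λ > 0`, `X ⊆ V(G)` and `I ⊆ X` an
independent set of `G`. Then `∑_{K ∈ 𝓘(G), K ∩ X = I} π_{G,λ}(K) ≤ λ^{|I|} Z_{G-X}(λ) / Z_G(λ)`,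
where `G - X` is the subgraph of `G` induced by `V(G) \ X`. -/
theorem statement_11 (V : Type) [Fintype V] [DecidableEq V] (G : SimpleGraph V)
    (lam : ℝ) (hlam : 0 < lam) (X I : Finset V) (hIX : I ⊆ X) (hI : IsIndep G I) :
    ∑ K ∈ (indepSets G).filter (fun K => K ∩ X = I), hardCore G lam K ≤
      lam ^ I.card * Z (inducedF G (Finset.univ \ X)) lam / Z G lam :=
  statement_11_general V G lam hlam X I
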